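/- Higher contiguity distance is an invariant of strong homotopy type: if β₁,...,βₙ : K' → K are right strong equivalences, α₁,...,αₙ : L → L' are left strong equivalences, and simplicial maps φ₁,...,φₙ : K → L, ψ₁,...,ψₙ : K' → L' satisfy αⱼ∘φⱼ∘βⱼ ∼ ψⱼ for each j, then SD(φ₁,...,φₙ) = SD(ψ₁,...,ψₙ). -/

import Mathlib

/-- An abstract simplicial complex on vertex type `V`. -/
structure ASC (V : Type) where
  faces : Set (Finset V)
  nonempty_of_mem : ∀ {s : Finset V}, s ∈ faces → s.Nonempty
  down_closed : ∀ {s t : Finset V}, s ∈ faces → t ⊆ s → t.Nonempty → t ∈ faces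

/-- A simplicial map between abstract simplicial complexes. -/
structure SMap {V W : Type} [DecidableEq W] (K : ASC V) (L : ASC W) where
  toFun : V → W
  maps_faces : ∀ {s : Finset V}, s ∈ K.faces → s.image toFun ∈ L.faces

namespace SMap

variable {V W U : Type} [DecidableEq V] [DecidableEq W] [DecidableEq U]
  {K : ASC V} {L : ASC W} {M : ASC U}

/-- The identity simplicial map. -/
def id (K : ASC V) : SMap K K :=
  ⟨fun v => v, by intro s hs; simpa using hs⟩

/-- Composition of simplicial maps. -/
def comp (ψ : SMap L M) (φ : SMap K L) : SMap K M :=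
  ⟨ψ.toFun ∘ φ.toFun, by
    intro s hs
    have h := ψ.maps_faces (φ.maps_faces hs)
    simpa [Finset.image_image] using h⟩

end SMap

/-- Two simplicial maps are contiguous if the images of each simplex under the two
maps together span a simplex. -/
def Contiguous {V W : Type} [DecidableEq W] {K : ASC V} {L : ASC W}
    (φ ψ : SMap K L) : Prop :=
  ∀ {s : Finset V}, s ∈ K.faces → (s.image φ.toFun ∪ s.image ψ.toFun) ∈ L.faces

/-- Being in the same contiguity class: the reflexive-transitive closure of
contiguity (`φ ∼ ψ`). -/
def CClass {V W : Type} [DecidableEq W] {K : ASC V} {L : ASC W}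
    (φ ψ : SMap K L) : Prop :=
  Relation.ReflTransGen Contiguous φ ψ

/-- The type of subcomplexes of `K`. -/
def ASC.Sub {V : Type} (K : ASC V) : Type :=
  {Ω : ASC V // Ω.faces ⊆ K.faces}

/-- Restriction of a simplicial map to a subcomplex of the domain. -/
def SMap.restrict {V W : Type} [DecidableEq W] {K : ASC V} {L : ASC W}
    (φ : SMap K L) (Ω : K.Sub) : SMap Ω.1 L :=
  ⟨φ.toFun, by intro s hs; exact φ.maps_faces (Ω.2 hs)⟩

/-- `SDle φ k` : the family `φ` has contiguity distance at most `k`, witnessed by a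
cover of `K` by `k+1` subcomplexes on each of which all the maps restrict into a
single contiguity class. -/
def SDle {V W : Type} [DecidableEq W] {K : ASC V} {L : ASC W} {n : ℕ}
    (φ : Fin n → SMap K L) (k : ℕ) : Prop :=
  ∃ Ω : Fin (k + 1) → K.Sub,
    (∀ s ∈ K.faces, ∃ j, s ∈ (Ω j).1.faces) ∧
    ∀ j i i', CClass ((φ i).restrict (Ω j)) ((φ i').restrict (Ω j))

/-- The `n`-th contiguity distance `SD(φ₁,…,φₙ)`, valued in `ℕ∞`. -/
noncomputable def SD {V W : Type} [DecidableEq W] {K : ASC V} {L : ASC W} {n : ℕ}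
    (φ : Fin n → SMap K L) : ℕ∞ :=
  sInf {m : ℕ∞ | ∃ k : ℕ, m = (k : ℕ∞) ∧ SDle φ k}

/-- `v` is a vertex of `K`. -/
def ASC.isVertex {V : Type} (K : ASC V) (v : V) : Prop :=
  ({v} : Finset V) ∈ K.faces

/-- The constant simplicial map at a vertex `v` of `L`. -/
def constMap {V W : Type} [DecidableEq W] (K : ASC V) (L : ASC W) {v : W}
    (hv : L.isVertex v) : SMap K L :=
  ⟨fun _ => v, by
    intro s hs
    rw [Finset.image_const (K.nonempty_of_mem hs) v]
    exact hv⟩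

/-- The inclusion of a subcomplex. -/
def incl {V : Type} [DecidableEq V] {K : ASC V} (Ω : K.Sub) : SMap Ω.1 K :=
  ⟨fun x => x, by intro s hs; simpa using Ω.2 hs⟩

/-- A subcomplex is categorical if its inclusion is in the same contiguity class
as a constant map. -/
def Categorical {V : Type} [DecidableEq V] {K : ASC V} (Ω : K.Sub) : Prop :=
  ∃ v : V, ∃ hv : K.isVertex v, CClass (incl Ω) (constMap Ω.1 K hv)

/-- `scatle K k` : `K` is covered by `k+1` categorical subcomplexes. -/
def scatle {V : Type} [DecidableEq V] (K : ASC V) (k : ℕ) : Prop :=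
  ∃ Ω : Fin (k + 1) → K.Sub,
    (∀ s ∈ K.faces, ∃ j, s ∈ (Ω j).1.faces) ∧ ∀ j, Categorical (Ω j)

/-- The simplicial Lusternik–Schnirelmann category, valued in `ℕ∞`. -/
noncomputable def scat {V : Type} [DecidableEq V] (K : ASC V) : ℕ∞ :=
  sInf {m : ℕ∞ | ∃ k : ℕ, m = (k : ℕ∞) ∧ scatle K k}

/-- The `n`-fold categorical product `Kⁿ`. -/
def ASC.prodPow {V : Type} [DecidableEq V] (K : ASC V) (n : ℕ) : ASC (Fin n → V) where
  faces := {s | s.Nonempty ∧ ∀ i : Fin n, s.image (fun f => f i) ∈ K.faces}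
  nonempty_of_mem := fun h => h.1
  down_closed := by
    intro s t hs hts ht
    refine ⟨ht, fun i => ?_⟩
    exact K.down_closed (hs.2 i) (Finset.image_subset_image (f := fun f => f i) hts)
      (ht.image _)

/-- Projection to the `i`-th factor of the categorical product. -/
def proj {V : Type} [DecidableEq V] (K : ASC V) (n : ℕ) (i : Fin n) :
    SMap (K.prodPow n) K :=
  ⟨fun f => f i, by intro s hs; exact hs.2 i⟩

/-- The diagonal simplicial map `K → Kⁿ`. -/
def diag {V : Type} [DecidableEq V] (K : ASC V) (n : ℕ) : SMap K (K.prodPow n) :=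
  ⟨fun v _ => v, by
    intro s hs
    refine ⟨(K.nonempty_of_mem hs).image _, fun i => ?_⟩
    have h : (s.image fun v (_ : Fin n) => v).image (fun f => f i) = s := by
      rw [Finset.image_image]
      exact Finset.image_id'
    rw [h]; exact hs⟩

/-- A subcomplex `Ω ⊆ Kⁿ` is `n`-Farber if the diagonal admits a section over `Ω`
up to contiguity class. -/
def IsFarber {V : Type} [DecidableEq V] {K : ASC V} {n : ℕ}
    (Ω : (K.prodPow n).Sub) : Prop :=
  ∃ σ : SMap Ω.1 K, CClass ((diag K n).comp σ) (incl Ω)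

/-- `dTCle K n k` : `Kⁿ` is covered by `k+1` `n`-Farber subcomplexes. -/
def dTCle {V : Type} [DecidableEq V] (K : ASC V) (n k : ℕ) : Prop :=
  ∃ Ω : Fin (k + 1) → (K.prodPow n).Sub,
    (∀ s ∈ (K.prodPow n).faces, ∃ j, s ∈ (Ω j).1.faces) ∧ ∀ j, IsFarber (Ω j)

/-- The `n`-th discrete topological complexity, valued in `ℕ∞`. -/
noncomputable def dTC {V : Type} [DecidableEq V] (K : ASC V) (n : ℕ) : ℕ∞ :=
  sInf {m : ℕ∞ | ∃ k : ℕ, m = (k : ℕ∞) ∧ dTCle K n k}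

/-- `K` is edge-path connected: any two vertices are joined by a finite edge path. -/
def ASC.EPConn {V : Type} [DecidableEq V] (K : ASC V) : Prop :=
  ∀ u v : V, K.isVertex u → K.isVertex v →
    Relation.ReflTransGen (fun a b => ({a, b} : Finset V) ∈ K.faces) u v

/-- `K` is strongly collapsible: the identity is in the same contiguity class as a
constant map. -/
def StronglyCollapsible {V : Type} [DecidableEq V] (K : ASC V) : Prop :=
  ∃ v : V, ∃ hv : K.isVertex v, CClass (SMap.id K) (constMap K K hv)

/-- `μ` is a right strong equivalence: it has a right strong homotopy inverse. -/
def RightStrongEq {V W : Type} [DecidableEq V] [DecidableEq W]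
    {K : ASC V} {L : ASC W} (μ : SMap K L) : Prop :=
  ∃ α : SMap L K, CClass (μ.comp α) (SMap.id L)

/-- `μ` is a left strong equivalence: it has a left strong homotopy inverse. -/
def LeftStrongEq {V W : Type} [DecidableEq V] [DecidableEq W]
    {K : ASC V} {L : ASC W} (μ : SMap K L) : Prop :=
  ∃ β : SMap L K, CClass (β.comp μ) (SMap.id K)

/-- The barycentric subdivision of `K`: vertices are the simplices of `K`, and
simplices are chains of simplices of `K`. -/
def ASC.sd {V : Type} (K : ASC V) : ASC (Finset V) where
  faces := {S | S.Nonempty ∧ (∀ σ ∈ S, σ ∈ K.faces) ∧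
    ∀ σ ∈ S, ∀ τ ∈ S, σ ⊆ τ ∨ τ ⊆ σ}
  nonempty_of_mem := fun h => h.1
  down_closed := fun hS hTS hT =>
    ⟨hT, fun σ hσ => hS.2.1 σ (hTS hσ), fun σ hσ τ hτ => hS.2.2 σ (hTS hσ) τ (hTS hτ)⟩

/-- The induced simplicial map on barycentric subdivisions. -/
def SMap.sd {V W : Type} [DecidableEq V] [DecidableEq W] {K : ASC V} {L : ASC W}
    (φ : SMap K L) : SMap K.sd L.sd :=
  ⟨fun σ => σ.image φ.toFun, by
    intro S hS
    refine ⟨hS.1.image _, ?_, ?_⟩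
    · intro τ hτ
      simp only [Finset.mem_image] at hτ
      obtain ⟨σ, hσ, rfl⟩ := hτ
      exact φ.maps_faces (hS.2.1 σ hσ)
    · intro τ₁ h₁ τ₂ h₂
      simp only [Finset.mem_image] at h₁ h₂
      obtain ⟨σ₁, hσ₁, rfl⟩ := h₁
      obtain ⟨σ₂, hσ₂, rfl⟩ := h₂
      rcases hS.2.2 σ₁ hσ₁ σ₂ hσ₂ with h | h
      · exact Or.inl (Finset.image_subset_image h)
      · exact Or.inr (Finset.image_subset_image h)⟩

/-!
A cover of `K` witnessing `SD(φ) ≤ k` pulls back along `β₁` to a cover of `K'`: on each pulled-back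
piece, `ψⱼ ∼ α₁ ∘ φⱼ ∘ β₁`, and these agree up to contiguity because the `φⱼ` do on the image piece.
Hence `SD(ψ) ≤ SD(φ)`. Conversely, with strong inverses `β₁ ∘ b ∼ id` and `a ∘ α₁ ∼ id` one gets
`a ∘ ψⱼ ∘ b ∼ φⱼ`, and the same argument gives `SD(φ) ≤ SD(ψ)`.
-/

section

variable {V V' W W' U : Type} {K : ASC V} {K' : ASC V'} {L : ASC W} {L' : ASC W'} {M : ASC U}

local infix:50 " ∼ " => CClass

theorem Contiguous.symm [DecidableEq W] {φ ψ : SMap K L} (h : Contiguous φ ψ) :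
    Contiguous ψ φ := by
  intro s hs
  rw [Finset.union_comm]
  exact h hs

instance [DecidableEq W] : Std.Symm (Contiguous (K := K) (L := L)) :=
  ⟨fun _ _ => Contiguous.symm⟩

namespace CClass

section

variable [DecidableEq W]

theorem symm {φ ψ : SMap K L} (h : φ ∼ ψ) : ψ ∼ φ :=
  Relation.ReflTransGen.stdSymm.symm _ _ h

theorem trans {φ ψ θ : SMap K L} (h : φ ∼ ψ) (h' : ψ ∼ θ) : φ ∼ θ :=
  Relation.ReflTransGen.trans h h'

instance : @Trans (SMap K L) (SMap K L) (SMap K L) CClass CClass CClass :=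
  ⟨CClass.trans⟩

theorem map [DecidableEq W'] (F : SMap K L → SMap K' L')
    (hF : ∀ φ ψ, Contiguous φ ψ → Contiguous (F φ) (F ψ)) {φ ψ : SMap K L} (h : φ ∼ ψ) :
    F φ ∼ F ψ :=
  Relation.ReflTransGen.lift F hF _ _ h

theorem restrict {φ ψ : SMap K L} (h : φ ∼ ψ) (Ω : K.Sub) : φ.restrict Ω ∼ ψ.restrict Ω :=
  h.map (·.restrict Ω) fun _ _ hfg _ hs => hfg (Ω.2 hs)

end

theorem comp_left [DecidableEq W] [DecidableEq U] (θ : SMap L M) {φ ψ : SMap K L}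
    (h : φ ∼ ψ) : θ.comp φ ∼ θ.comp ψ := by
  refine h.map (θ.comp ·) fun f g hfg s hs => ?_
  simpa [SMap.comp, Finset.image_union, Finset.image_image] using θ.maps_faces (hfg hs)

theorem comp_right [DecidableEq V] [DecidableEq W] (θ : SMap M K) {φ ψ : SMap K L}
    (h : φ ∼ ψ) : φ.comp θ ∼ ψ.comp θ := by
  refine h.map (·.comp θ) fun f g hfg s hs => ?_
  simpa [SMap.comp, Finset.image_image] using hfg (θ.maps_faces hs)

theorem comp [DecidableEq V] [DecidableEq W] [DecidableEq U] {θ θ' : SMap L M}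
    {φ φ' : SMap K L} (hθ : θ ∼ θ') (hφ : φ ∼ φ') : θ.comp φ ∼ θ'.comp φ' :=
  (comp_left θ hφ).trans (comp_right φ' hθ)

theorem comp_strongInverses [DecidableEq V] [DecidableEq V'] [DecidableEq W] [DecidableEq W']
    {β : SMap K' K} {b : SMap K K'} (hb : β.comp b ∼ SMap.id K)
    {α : SMap L L'} {a : SMap L' L} (ha : a.comp α ∼ SMap.id L)
    {φ : SMap K L} {ψ : SMap K' L'} (h : α.comp (φ.comp β) ∼ ψ) :
    a.comp (ψ.comp b) ∼ φ :=
  calc a.comp (ψ.comp b)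
      _ ∼ a.comp ((α.comp (φ.comp β)).comp b) := comp_left a (comp_right b h.symm)
      _ = (a.comp α).comp (φ.comp (β.comp b)) := rfl
      _ ∼ (SMap.id L).comp (φ.comp (SMap.id K)) := comp ha (comp_left φ hb)
      _ = φ := rfl

end CClass

def ASC.Sub.comap [DecidableEq V] (b : SMap K' K) (Ω : K.Sub) : K'.Sub :=
  ⟨⟨{s | s ∈ K'.faces ∧ s.image b.toFun ∈ Ω.1.faces},
    fun h => K'.nonempty_of_mem h.1,
    fun hs hts ht => ⟨K'.down_closed hs.1 hts ht,
      Ω.1.down_closed hs.2 (Finset.image_subset_image hts) (ht.image _)⟩⟩,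
    fun _ h => h.1⟩

def SMap.restrictComap [DecidableEq V] (b : SMap K' K) (Ω : K.Sub) :
    SMap (Ω.comap b).1 Ω.1 :=
  ⟨b.toFun, fun hs => hs.2⟩

theorem SDle.of_cclass_comp [DecidableEq V] [DecidableEq W] [DecidableEq W'] {n k : ℕ}
    {b : SMap K' K} {a : SMap L L'} {φ : Fin n → SMap K L} {ψ : Fin n → SMap K' L'}
    (h : ∀ j, a.comp ((φ j).comp b) ∼ ψ j) (hk : SDle φ k) : SDle ψ k := by
  obtain ⟨Ω, hcover, hclass⟩ := hk
  refine ⟨fun j => (Ω j).comap b, fun s hs => ?_, fun j i i' => ?_⟩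
  · obtain ⟨j, hj⟩ := hcover (s.image b.toFun) (b.maps_faces hs)
    exact ⟨j, hs, hj⟩
  · let r := b.restrictComap (Ω j)
    calc (ψ i).restrict ((Ω j).comap b)
        _ ∼ (a.comp ((φ i).comp b)).restrict ((Ω j).comap b) := (h i).symm.restrict _
        _ = a.comp (((φ i).restrict (Ω j)).comp r) := rfl
        _ ∼ a.comp (((φ i').restrict (Ω j)).comp r) :=
          CClass.comp_left a (CClass.comp_right r (hclass j i i'))
        _ = (a.comp ((φ i').comp b)).restrict ((Ω j).comap b) := rfl
        _ ∼ (ψ i').restrict ((Ω j).comap b) := (h i').restrict _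

theorem SD_le_of_forall_SDle [DecidableEq W] [DecidableEq W'] {n m : ℕ}
    {φ : Fin n → SMap K L} {ψ : Fin m → SMap K' L'} (h : ∀ k, SDle φ k → SDle ψ k) :
    SD ψ ≤ SD φ :=
  sInf_le_sInf fun _ ⟨k, hm, hk⟩ => ⟨k, hm, h k hk⟩

theorem SD_le_of_cclass_comp [DecidableEq V] [DecidableEq W] [DecidableEq W'] {n : ℕ}
    {b : SMap K' K} {a : SMap L L'} {φ : Fin n → SMap K L} {ψ : Fin n → SMap K' L'}
    (h : ∀ j, a.comp ((φ j).comp b) ∼ ψ j) : SD ψ ≤ SD φ :=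
  SD_le_of_forall_SDle fun _ => SDle.of_cclass_comp h

theorem SD_fin_zero [DecidableEq W] (φ : Fin 0 → SMap K L) : SD φ = 0 :=
  nonpos_iff_eq_zero.mp <| sInf_le
    ⟨0, rfl, fun _ => ⟨K, fun _ h => h⟩, fun _ hs => ⟨0, hs⟩, fun _ i => i.elim0⟩

end

/-- higher contiguity distance is an invariant of strong homotopy
type. -/
theorem SD_strong_homotopy_invariant {V V' W W' : Type}
    [DecidableEq V] [DecidableEq V'] [DecidableEq W] [DecidableEq W']
    {K : ASC V} {K' : ASC V'} {L : ASC W} {L' : ASC W'} {n : ℕ}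
    (β : Fin n → SMap K' K) (hβ : ∀ j, RightStrongEq (β j))
    (hββ : ∀ j j', CClass (β j) (β j'))
    (α : Fin n → SMap L L') (hα : ∀ j, LeftStrongEq (α j))
    (hαα : ∀ j j', CClass (α j) (α j'))
    (φ : Fin n → SMap K L) (ψ : Fin n → SMap K' L')
    (hcomm : ∀ j, CClass ((α j).comp ((φ j).comp (β j))) (ψ j)) :
    SD φ = SD ψ := by
  rcases n with _ | n
  · rw [SD_fin_zero φ, SD_fin_zero ψ]
  obtain ⟨b, hb⟩ := hβ 0
  obtain ⟨a, ha⟩ := hα 0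
  have hforward : ∀ j, CClass ((α 0).comp ((φ j).comp (β 0))) (ψ j) := fun j =>
    ((hαα 0 j).comp (CClass.comp_left (φ j) (hββ 0 j))).trans (hcomm j)
  have hbackward : ∀ j, CClass (a.comp ((ψ j).comp b)) (φ j) := fun j =>
    CClass.comp_strongInverses hb ha (hforward j)
  exact le_antisymm (SD_le_of_cclass_comp hbackward) (SD_le_of_cclass_comp hforward)
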